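/- Let n ≥ 3 be an integer and let t₀ ∈ ℝ. The function v : ℝ → ℝ defined by v(t) = (cosh(t − t₀))^((2−n)/2) is positive, twice differentiable, satisfies the Delaunay ODE v''(t) − ((n−2)²/4)·v(t) + (n·(n−2)/4)·v(t)^((n+2)/(n−2)) = 0 for all t ∈ ℝ, and H(v(t), v'(t)) = 0 for all t ∈ ℝ. -/

import Mathlib

/-- The Delaunay ODE: `v'' − ((n−2)²/4)·v + (n·(n−2)/4)·v^((n+2)/(n−2)) = 0`. -/
def DelaunayODE (n : ℕ) (v : ℝ → ℝ) : Prop :=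
  ∀ t : ℝ, deriv (deriv v) t - (((n : ℝ) - 2) ^ 2 / 4) * v t
    + ((n : ℝ) * ((n : ℝ) - 2) / 4) * v t ^ (((n : ℝ) + 2) / ((n : ℝ) - 2)) = 0

/-- The Hamiltonian energy of the Delaunay ODE:
`H(v, w) = w² − ((n−2)²/4)·v² + ((n−2)²/4)·v^(2n/(n−2))`. -/
noncomputable def delaunayH (n : ℕ) (v w : ℝ) : ℝ :=
  w ^ 2 - (((n : ℝ) - 2) ^ 2 / 4) * v ^ 2
    + (((n : ℝ) - 2) ^ 2 / 4) * v ^ (2 * (n : ℝ) / ((n : ℝ) - 2))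

/-!
With `a = (2 - n)/2` the profile is `v = cosh(t - t₀)^a`. Differentiating twice and using
`sinh² = cosh² - 1` gives `v'' = a² v - a(a-1) cosh^(a-2)` and `v'² = a² v² - a² cosh^(2(a-1))`.
Since `a² = (n-2)²/4`, `a(a-1) = n(n-2)/4`, `cosh^(a-2) = v^((n+2)/(n-2))` and
`cosh^(2(a-1)) = v^(2n/(n-2))`, these are the Delaunay ODE and the vanishing of its energy.
-/

open Real

namespace Real

variable (a t₀ : ℝ)

theorem hasDerivAt_cosh_sub_rpow (t : ℝ) :
    HasDerivAt (fun s => cosh (s - t₀) ^ a) (a * sinh (t - t₀) * cosh (t - t₀) ^ (a - 1)) t := by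
  have hcosh : HasDerivAt (fun s => cosh (s - t₀)) (sinh (t - t₀)) t := by
    simpa using (hasDerivAt_cosh (t - t₀)).comp_sub_const t t₀
  exact (hcosh.rpow_const (Or.inl (cosh_pos _).ne')).congr_deriv (by ring)

theorem deriv_cosh_sub_rpow :
    deriv (fun s => cosh (s - t₀) ^ a) = fun t => a * sinh (t - t₀) * cosh (t - t₀) ^ (a - 1) :=
  funext fun t => (hasDerivAt_cosh_sub_rpow a t₀ t).deriv

theorem hasDerivAt_deriv_cosh_sub_rpow (t : ℝ) :
    HasDerivAt (deriv fun s => cosh (s - t₀) ^ a)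
      (a ^ 2 * cosh (t - t₀) ^ a - a * (a - 1) * cosh (t - t₀) ^ (a - 2)) t := by
  set C := cosh (t - t₀)
  have hC : 0 < C := cosh_pos _
  have hsinh : HasDerivAt (fun s => sinh (s - t₀)) C t := by
    simpa using (hasDerivAt_sinh (t - t₀)).comp_sub_const t t₀
  have hpow : HasDerivAt (fun s => cosh (s - t₀) ^ (a - 1))
      ((a - 1) * sinh (t - t₀) * C ^ (a - 1 - 1)) t :=
    hasDerivAt_cosh_sub_rpow (a - 1) t₀ t
  rw [deriv_cosh_sub_rpow]
  refine ((hsinh.const_mul a).mul hpow).congr_deriv ?_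
  have hsq : sinh (t - t₀) ^ 2 = C ^ 2 - 1 := by rw [cosh_sq]; ring
  have hCa : C ^ a = C ^ (a - 2) * C ^ 2 := by
    rw [← rpow_two, ← rpow_add hC]; ring_nf
  have hCa1 : C ^ (a - 1) = C ^ (a - 2) * C := by
    rw [← rpow_add_one hC.ne']; ring_nf
  rw [show a - 1 - 1 = a - 2 by ring, hCa, hCa1]
  linear_combination a * (a - 1) * C ^ (a - 2) * hsq

theorem sq_deriv_cosh_sub_rpow (t : ℝ) :
    deriv (fun s => cosh (s - t₀) ^ a) t ^ 2
      = a ^ 2 * (cosh (t - t₀) ^ a) ^ 2 - a ^ 2 * cosh (t - t₀) ^ (2 * (a - 1)) := by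
  set C := cosh (t - t₀)
  have hC : 0 < C := cosh_pos _
  have hsq : sinh (t - t₀) ^ 2 = C ^ 2 - 1 := by rw [cosh_sq]; ring
  have hCa : (C ^ a) ^ 2 = C ^ (2 * (a - 1)) * C ^ 2 := by
    rw [← rpow_two, ← rpow_two, ← rpow_mul hC.le, ← rpow_add hC]; ring_nf
  have hCa1 : (C ^ (a - 1)) ^ 2 = C ^ (2 * (a - 1)) := by
    rw [← rpow_two, ← rpow_mul hC.le, mul_comm]
  rw [deriv_cosh_sub_rpow, mul_pow, mul_pow, hCa1, hCa, hsq]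
  ring

end Real

theorem stmt_8 (n : ℕ) (hn : 3 ≤ n) (t₀ : ℝ)
    (v : ℝ → ℝ) (hv : ∀ t : ℝ, v t = Real.cosh (t - t₀) ^ ((2 - (n : ℝ)) / 2)) :
    (∀ t : ℝ, 0 < v t) ∧ Differentiable ℝ v ∧ Differentiable ℝ (deriv v) ∧
      DelaunayODE n v ∧ ∀ t : ℝ, delaunayH n (v t) (deriv v t) = 0 := by
  obtain rfl : v = fun t => cosh (t - t₀) ^ ((2 - (n : ℝ)) / 2) := funext hv
  set a : ℝ := (2 - (n : ℝ)) / 2 with ha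
  have hn2 : (n : ℝ) - 2 ≠ 0 := by
    have : (3 : ℝ) ≤ n := by exact_mod_cast hn
    linarith
  refine ⟨fun t => rpow_pos_of_pos (cosh_pos _) _,
    fun t => (hasDerivAt_cosh_sub_rpow a t₀ t).differentiableAt,
    fun t => (hasDerivAt_deriv_cosh_sub_rpow a t₀ t).differentiableAt, fun t => ?_, fun t => ?_⟩
  · have hC : 0 < cosh (t - t₀) := cosh_pos _
    rw [(hasDerivAt_deriv_cosh_sub_rpow a t₀ t).deriv, ← rpow_mul hC.le,
      show a * (((n : ℝ) + 2) / ((n : ℝ) - 2)) = a - 2 by rw [ha]; field_simp; ring]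
    ring
  · have hC : 0 < cosh (t - t₀) := cosh_pos _
    rw [delaunayH, sq_deriv_cosh_sub_rpow, ← rpow_mul hC.le,
      show a * (2 * (n : ℝ) / ((n : ℝ) - 2)) = 2 * (a - 1) by rw [ha]; field_simp; ring]
    ring
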